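/- Let T, D ∈ ℕ and ℓ ∈ ℕ ∪ {0}. For every pair of node-neighboring insertion-only graph streams S, S' of length T and every time step t ∈ [T] such that both S and S' are (D,ℓ)-bounded through time t, the node distance between the BBDS-projected streams satisfies d_node(Π^BBDS_D(S)_[t], Π^BBDS_D(S')_[t]) ≤ 2ℓ + 1. -/

import Mathlib

open Finset

/-- A finite graph: a finite vertex set together with a finite set of undirected edges. -/
structure FinGraph where
  verts : Finset ℕ
  edges : Finset (Sym2 ℕ)

namespace FinGraph

/-- A finite graph is valid if every edge is a non-loop both of whose endpoints are vertices. -/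
def Valid (G : FinGraph) : Prop :=
  ∀ e ∈ G.edges, ¬ e.IsDiag ∧ ∀ v ∈ e, v ∈ G.verts

/-- The degree of a vertex: the number of edges containing it. -/
def degree (G : FinGraph) (v : ℕ) : ℕ :=
  (G.edges.filter (fun e => v ∈ e)).card

/-- Remove a node and all of its adjacent edges. -/
def removeNode (G : FinGraph) (v : ℕ) : FinGraph :=
  ⟨G.verts.erase v, G.edges.filter (fun e => v ∉ e)⟩

/-- Remove a single edge. -/
def removeEdge (G : FinGraph) (e : Sym2 ℕ) : FinGraph :=
  ⟨G.verts, G.edges.erase e⟩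

/-- `G` is `(D, ℓ)`-bounded: it has at most `ℓ` nodes of degree greater than `D`. -/
def DLBounded (G : FinGraph) (D ℓ : ℕ) : Prop :=
  (G.verts.filter (fun v => D < G.degree v)).card ≤ ℓ

end FinGraph

/-- One graph is obtained from the other by removing one node and all of its adjacent edges. -/
def nodeNeighborGraph (G G' : FinGraph) : Prop :=
  (∃ v ∈ G.verts, G' = G.removeNode v) ∨ (∃ v ∈ G'.verts, G = G'.removeNode v)

/-- `G'` is obtained from `G` by removing a single edge, an isolated node,
or a degree-one node together with its adjacent edge. -/
def edgeRemovalGraph (G G' : FinGraph) : Prop :=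
  (∃ e ∈ G.edges, G' = G.removeEdge e) ∨
  (∃ v ∈ G.verts, G.degree v = 0 ∧ G' = FinGraph.mk (G.verts.erase v) G.edges) ∨
  (∃ v ∈ G.verts, G.degree v = 1 ∧ G' = G.removeNode v)

/-- Edge-neighboring graphs. -/
def edgeNeighborGraph (G G' : FinGraph) : Prop :=
  edgeRemovalGraph G G' ∨ edgeRemovalGraph G' G

/-- The length of a shortest chain of valid graphs from `A` to `B` in which
consecutive graphs are related by `R`. -/
noncomputable def graphChainDist (R : FinGraph → FinGraph → Prop) (A B : FinGraph) : ℕ :=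
  sInf {n | ∃ f : ℕ → FinGraph, f 0 = A ∧ f n = B ∧ (∀ i ≤ n, (f i).Valid) ∧
    ∀ i < n, R (f i) (f (i + 1))}

/-- Node distance between finite graphs. -/
noncomputable def graphNodeDist : FinGraph → FinGraph → ℕ := graphChainDist nodeNeighborGraph

/-- Edge distance between finite graphs. -/
noncomputable def graphEdgeDist : FinGraph → FinGraph → ℕ := graphChainDist edgeNeighborGraph

/-- An insertion-only graph stream: the nodes and edges arriving at each time step. -/
structure GraphStream where
  nodes : ℕ → Finset ℕ
  edges : ℕ → Finset (Sym2 ℕ)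

namespace GraphStream

/-- Validity of a graph stream of length `T`: arrivals happen only at times `1, …, T`,
no node or edge arrives twice, and every edge is a non-loop whose endpoints
arrive at or before the edge does. -/
def Valid (T : ℕ) (S : GraphStream) : Prop :=
  (∀ t, ((S.nodes t).Nonempty ∨ (S.edges t).Nonempty) → 1 ≤ t ∧ t ≤ T) ∧
  (∀ s t, s ≠ t → Disjoint (S.nodes s) (S.nodes t)) ∧
  (∀ s t, s ≠ t → Disjoint (S.edges s) (S.edges t)) ∧
  (∀ t, ∀ e ∈ S.edges t, ¬ e.IsDiag ∧ ∀ v ∈ e, ∃ s ≤ t, v ∈ S.nodes s)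

/-- The flattened graph of the stream through time `t`. -/
def flat (S : GraphStream) (t : ℕ) : FinGraph :=
  ⟨(Finset.range (t + 1)).biUnion S.nodes, (Finset.range (t + 1)).biUnion S.edges⟩

/-- Remove a node and all of its adjacent edges from a stream. -/
def removeNode (S : GraphStream) (v : ℕ) : GraphStream :=
  ⟨fun t => (S.nodes t).erase v, fun t => (S.edges t).filter (fun e => v ∉ e)⟩

/-- Remove a single edge from a stream. -/
def removeEdge (S : GraphStream) (e : Sym2 ℕ) : GraphStream :=
  ⟨S.nodes, fun t => (S.edges t).erase e⟩

/-- Truncation of a stream: keep only arrivals at times `≤ t`. -/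
def trunc (S : GraphStream) (t : ℕ) : GraphStream :=
  ⟨fun s => if s ≤ t then S.nodes s else ∅, fun s => if s ≤ t then S.edges s else ∅⟩

/-- `v` arrives at some point in the stream. -/
def hasNode (S : GraphStream) (v : ℕ) : Prop :=
  ∃ t, v ∈ S.nodes t

/-- The stream is `(D, ℓ)`-bounded through time `t`. -/
def DLBoundedThrough (S : GraphStream) (D ℓ t : ℕ) : Prop :=
  (S.flat t).DLBounded D ℓ

end GraphStream

/-- `S'` is obtained from `S` by removing one node and all of its adjacent edges
(which may arrive at many time steps). -/
def nodeRemovalStream (S S' : GraphStream) : Prop :=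
  ∃ v, S.hasNode v ∧ S' = S.removeNode v

/-- Node-neighboring streams. -/
def nodeNeighborStream (S S' : GraphStream) : Prop :=
  nodeRemovalStream S S' ∨ nodeRemovalStream S' S

/-- `S'` is obtained from the length-`T` stream `S` by removing a single edge,
an isolated node, or a degree-one node together with its adjacent edge. -/
def edgeRemovalStream (T : ℕ) (S S' : GraphStream) : Prop :=
  (∃ t, ∃ e ∈ S.edges t, S' = S.removeEdge e) ∨
  (∃ v, S.hasNode v ∧ (S.flat T).degree v ≤ 1 ∧ S' = S.removeNode v)

/-- Edge-neighboring streams (of length `T`). -/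
def edgeNeighborStream (T : ℕ) (S S' : GraphStream) : Prop :=
  edgeRemovalStream T S S' ∨ edgeRemovalStream T S' S

/-- Length of a shortest chain of valid streams of length `T` in which consecutive
streams are related by `R`. -/
noncomputable def streamChainDist (T : ℕ) (R : GraphStream → GraphStream → Prop)
    (A B : GraphStream) : ℕ :=
  sInf {n | ∃ f : ℕ → GraphStream, f 0 = A ∧ f n = B ∧ (∀ i ≤ n, (f i).Valid T) ∧
    ∀ i < n, R (f i) (f (i + 1))}

/-- Node distance between streams of length `T`. -/
noncomputable def streamNodeDist (T : ℕ) : GraphStream → GraphStream → ℕ :=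
  streamChainDist T nodeNeighborStream

/-- Edge distance between streams of length `T`. -/
noncomputable def streamEdgeDist (T : ℕ) : GraphStream → GraphStream → ℕ :=
  streamChainDist T (edgeNeighborStream T)

/-- A fixed injective key on undirected edges, providing the consistent total order in
which edges arriving at the same time step are processed. -/
def edgeKey : Sym2 ℕ → ℕ :=
  Sym2.lift ⟨fun a b => Nat.pair (min a b) (max a b), fun a b => by
    dsimp only; rw [inf_comm, sup_comm]⟩

/-- The two endpoints of an edge, as an ordered pair. -/
def endpointsOf (e : Sym2 ℕ) : ℕ × ℕ := (edgeKey e).unpair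

/-- The edges of a finite edge set, listed in increasing `edgeKey` order. -/
def sortEdges (E : Finset (Sym2 ℕ)) : List (Sym2 ℕ) :=
  ((E.image edgeKey).sort (· ≤ ·)).map fun k => s(k.unpair.1, k.unpair.2)

/-- All edges of a stream of length `T`, tagged with their arrival times, in processing
order: lexicographically by (arrival time, consistent edge order). -/
def GraphStream.procList (S : GraphStream) (T : ℕ) : List (ℕ × Sym2 ℕ) :=
  (List.range (T + 1)).flatMap fun t => (sortEdges (S.edges t)).map fun e => (t, e)

/-- One step of the greedy projection with degree bound `D`.  The state consists of the
degree counters together with the edges kept so far (indexed by arrival time).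
If `bbds = true` the counters of the endpoints are incremented for every processed edge
(the BBDS rule); if `bbds = false` they are incremented only when the edge is kept
(the DLL rule). -/
def projStep (D : ℕ) (bbds : Bool) (st : (ℕ → ℕ) × (ℕ → Finset (Sym2 ℕ)))
    (p : ℕ × Sym2 ℕ) : (ℕ → ℕ) × (ℕ → Finset (Sym2 ℕ)) :=
  let d := st.1
  let u := (endpointsOf p.2).1
  let v := (endpointsOf p.2).2
  let keep : Bool := decide (d u < D ∧ d v < D)
  ((if bbds || keep then fun w => if w = u ∨ w = v then d w + 1 else d w else d),
   (if keep then fun s => if s = p.1 then insert p.2 (st.2 s) else st.2 s else st.2))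

/-- The time-aware projection with degree bound `D` on streams of length `T`:
the BBDS projection if `bbds = true` and the DLL projection if `bbds = false`.
All arriving nodes are kept; an arriving edge is kept (at its arrival time) iff both of
its endpoints have counter value `< D` when the edge is processed. -/
def project (bbds : Bool) (D T : ℕ) (S : GraphStream) : GraphStream :=
  ⟨S.nodes,
   ((S.procList T).foldl (projStep D bbds)
      ((fun _ => 0 : ℕ → ℕ), (fun _ => ∅ : ℕ → Finset (Sym2 ℕ)))).2⟩

/-- The BBDS projection `Π^BBDS_D` on streams of length `T`. -/
def projBBDS (D T : ℕ) : GraphStream → GraphStream := project true D T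

/-- The DLL projection `Π^DLL_D` on streams of length `T`. -/
def projDLL (D T : ℕ) : GraphStream → GraphStream := project false D T

/-!
In the BBDS projection the counter of a node counts every processed edge at it, kept or not.
So an edge whose endpoints both have degree at most `D` in `flat(S_[t])` sees counters below `D`
and is kept. Let `W` be the at most `ℓ` nodes of degree above `D` other than `v`. Deleting
`W ∪ {v}` from `Π(S)_[t]` and deleting `W` from `Π(S - v)_[t]` both give `S_[t]` with `W ∪ {v}`
deleted, and deleting a node is a node-neighbouring step, so the two projections are joined by a
chain of at most `(ℓ + 1) + ℓ` steps.
-/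

lemma endpointsOf_mk (a b : ℕ) : endpointsOf s(a, b) = (min a b, max a b) := by
  simp [endpointsOf, edgeKey, Nat.unpair_pair]

lemma mk_endpointsOf (e : Sym2 ℕ) : s((endpointsOf e).1, (endpointsOf e).2) = e := by
  induction e using Sym2.ind with
  | _ a b =>
    rw [endpointsOf_mk]
    rcases le_total a b with h | h
    · simp [h]
    · simp [h, Sym2.eq_swap]

lemma mem_iff_eq_endpointsOf {e : Sym2 ℕ} {x : ℕ} :
    x ∈ e ↔ x = (endpointsOf e).1 ∨ x = (endpointsOf e).2 := by
  conv_lhs => rw [← mk_endpointsOf e]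
  exact Sym2.mem_iff

lemma mem_sortEdges {E : Finset (Sym2 ℕ)} {e : Sym2 ℕ} : e ∈ sortEdges E ↔ e ∈ E := by
  simp only [sortEdges, List.mem_map, Finset.mem_sort, Finset.mem_image]
  constructor
  · rintro ⟨_, ⟨e', he', rfl⟩, rfl⟩
    rwa [← endpointsOf, mk_endpointsOf]
  · exact fun he => ⟨edgeKey e, ⟨e, he, rfl⟩, mk_endpointsOf e⟩

lemma nodup_sortEdges (E : Finset (Sym2 ℕ)) : (sortEdges E).Nodup := by
  refine List.Nodup.map_on ?_ (Finset.sort_nodup _ _)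
  intro k₁ h₁ k₂ h₂ h
  rw [Finset.mem_sort, Finset.mem_image] at h₁ h₂
  obtain ⟨e₁, _, rfl⟩ := h₁
  obtain ⟨e₂, _, rfl⟩ := h₂
  rw [← endpointsOf, ← endpointsOf, mk_endpointsOf, mk_endpointsOf] at h
  rw [h]

namespace GraphStream

lemma mem_procList {S : GraphStream} {T : ℕ} {p : ℕ × Sym2 ℕ} :
    p ∈ S.procList T ↔ p.1 ≤ T ∧ p.2 ∈ S.edges p.1 := by
  obtain ⟨τ, e⟩ := p
  simp only [procList, List.mem_flatMap, List.mem_map, List.mem_range, Nat.lt_succ_iff,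
    Prod.mk.injEq, mem_sortEdges]
  constructor
  · rintro ⟨_, hτ, _, he, rfl, rfl⟩
    exact ⟨hτ, he⟩
  · rintro ⟨hτ, he⟩
    exact ⟨τ, hτ, e, he, rfl, rfl⟩

lemma procList_prefix (S : GraphStream) {t T : ℕ} (h : t ≤ T) :
    S.procList t <+: S.procList T := by
  obtain ⟨k, rfl⟩ := Nat.exists_eq_add_of_le h
  rw [procList, procList, show t + k + 1 = t + 1 + k by omega, List.range_add (n := t + 1),
    List.flatMap_append]
  exact List.prefix_append _ _

lemma nodup_procList_snd {S : GraphStream} {T : ℕ} (hS : S.Valid T) (t : ℕ) :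
    ((S.procList t).map Prod.snd).Nodup := by
  have hsnd : ∀ τ, (sortEdges (S.edges τ)).map (Prod.snd ∘ fun e => (τ, e))
      = sortEdges (S.edges τ) := fun τ => by simp
  rw [procList, List.map_flatMap]
  simp only [List.map_map, hsnd, List.nodup_flatMap]
  refine ⟨fun τ _ => nodup_sortEdges _, List.pairwise_lt_range.imp fun hab e he₁ he₂ => ?_⟩
  rw [mem_sortEdges] at he₁ he₂
  exact Finset.disjoint_left.1 (hS.2.2.1 _ _ hab.ne) he₁ he₂

end GraphStream

section projStep

variable {D : ℕ} {b : Bool}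

lemma foldl_projStep_fst (L : List (ℕ × Sym2 ℕ)) (c : (ℕ → ℕ) × (ℕ → Finset (Sym2 ℕ)))
    (u : ℕ) : (L.foldl (projStep D true) c).1 u = c.1 u + L.countP (fun p => u ∈ p.2) := by
  induction L generalizing c with
  | nil => simp
  | cons p L ih =>
    rw [List.foldl_cons, ih, List.countP_cons]
    by_cases hu : u ∈ p.2
    · simp only [projStep, Bool.true_or, ↓reduceIte, mem_iff_eq_endpointsOf.1 hu, hu, decide_true]
      omega
    · simp [projStep, ← mem_iff_eq_endpointsOf, hu]

lemma foldl_projStep_snd_mono (L : List (ℕ × Sym2 ℕ)) (c : (ℕ → ℕ) × (ℕ → Finset (Sym2 ℕ)))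
    (s : ℕ) : c.2 s ⊆ (L.foldl (projStep D b) c).2 s := by
  induction L generalizing c with
  | nil => exact subset_rfl
  | cons p L ih =>
    refine subset_trans ?_ (ih _)
    simp only [projStep]
    split_ifs
    · by_cases hs : s = p.1 <;> simp [hs]
    · exact subset_rfl

lemma mem_projStep_snd {c : (ℕ → ℕ) × (ℕ → Finset (Sym2 ℕ))} {p : ℕ × Sym2 ℕ}
    (hp : ∀ a ∈ p.2, c.1 a < D) : p.2 ∈ (projStep D b c p).2 p.1 := by
  have hu := hp _ (mem_iff_eq_endpointsOf.2 (Or.inl rfl))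
  have hv := hp _ (mem_iff_eq_endpointsOf.2 (Or.inr rfl))
  simp [projStep, hu, hv]

lemma mem_of_mem_foldl_projStep_snd {L : List (ℕ × Sym2 ℕ)}
    {c : (ℕ → ℕ) × (ℕ → Finset (Sym2 ℕ))} {s : ℕ} {e : Sym2 ℕ}
    (he : e ∈ (L.foldl (projStep D b) c).2 s) : e ∈ c.2 s ∨ (s, e) ∈ L := by
  induction L generalizing c with
  | nil => exact Or.inl he
  | cons p L ih =>
    rcases ih he with h | h
    · simp only [projStep] at h
      split_ifs at h
      · dsimp only at h
        split_ifs at h with hs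
        · rcases Finset.mem_insert.1 h with rfl | h
          · exact Or.inr (by simp [hs])
          · exact Or.inl h
        · exact Or.inl h
      · exact Or.inl h
    · exact Or.inr (List.mem_cons_of_mem _ h)

end projStep

namespace FinGraph

def heavyVerts (G : FinGraph) (D : ℕ) : Finset ℕ :=
  G.verts.filter (fun v => D < G.degree v)

lemma countP_mem_le_degree (G : FinGraph) {M : List (Sym2 ℕ)} (hM : M.Nodup)
    (hG : ∀ e ∈ M, e ∈ G.edges) (a : ℕ) : M.countP (fun e => a ∈ e) ≤ G.degree a := by
  rw [List.countP_eq_length_filter, ← List.toFinset_card_of_nodup (hM.filter _)]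
  refine Finset.card_le_card fun e he => ?_
  simp only [List.mem_toFinset, List.mem_filter, decide_eq_true_eq] at he
  exact Finset.mem_filter.2 ⟨hG e he.1, he.2⟩

lemma degree_removeNode_le (G : FinGraph) (v a : ℕ) : (G.removeNode v).degree a ≤ G.degree a :=
  Finset.card_le_card (Finset.filter_subset_filter _ (Finset.filter_subset _ _))

lemma heavyVerts_removeNode_subset (G : FinGraph) (D v : ℕ) :
    (G.removeNode v).heavyVerts D ⊆ (G.heavyVerts D).erase v := by
  intro a ha
  obtain ⟨hav, hdeg⟩ := Finset.mem_filter.1 ha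
  obtain ⟨hne, ha⟩ := Finset.mem_erase.1 hav
  exact Finset.mem_erase.2
    ⟨hne, Finset.mem_filter.2 ⟨ha, hdeg.trans_le (G.degree_removeNode_le v a)⟩⟩

end FinGraph

/-- When `p` is processed, the BBDS counter of each endpoint counts the edges of `L₁` at it,
which are distinct edges of `G` other than `p.2`. -/
lemma mem_foldl_projStep_of_degree_le {G : FinGraph} {D : ℕ} {L₁ L₂ : List (ℕ × Sym2 ℕ)}
    {p : ℕ × Sym2 ℕ} (hnd : ((L₁ ++ [p]).map Prod.snd).Nodup)
    (hG : ∀ q ∈ L₁ ++ [p], q.2 ∈ G.edges) (hdeg : ∀ a ∈ p.2, G.degree a ≤ D) :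
    p.2 ∈ ((L₁ ++ p :: L₂).foldl (projStep D true) (fun _ => 0, fun _ => ∅)).2 p.1 := by
  rw [List.foldl_append, List.foldl_cons]
  refine foldl_projStep_snd_mono _ _ _ (mem_projStep_snd fun a ha => ?_)
  have hcount : L₁.countP (fun q => a ∈ q.2) + 1 ≤ G.degree a := by
    have := G.countP_mem_le_degree hnd (fun e he => by
      obtain ⟨q, hq, rfl⟩ := List.mem_map.1 he
      exact hG q hq) a
    simpa [List.countP_map, Function.comp_def, ha] using this
  rw [foldl_projStep_fst]
  have := hdeg a ha
  dsimp only
  omega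

attribute [ext] GraphStream

namespace GraphStream

def removeNodes (S : GraphStream) (W : Finset ℕ) : GraphStream :=
  ⟨fun t => S.nodes t \ W, fun t => (S.edges t).filter (fun e => ∀ w ∈ W, w ∉ e)⟩

lemma removeNodes_empty (S : GraphStream) : S.removeNodes ∅ = S := by
  ext <;> simp [removeNodes]

lemma removeNodes_insert (S : GraphStream) (W : Finset ℕ) (v : ℕ) :
    S.removeNodes (insert v W) = (S.removeNodes W).removeNode v := by
  ext t x <;>
    simp only [removeNodes, removeNode, mem_insert, forall_eq_or_imp, mem_sdiff, mem_erase,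
      mem_filter, not_or] <;> tauto

lemma removeNodes_trunc_removeNode (S : GraphStream) (W : Finset ℕ) (v t : ℕ) :
    ((S.removeNode v).trunc t).removeNodes W = (S.trunc t).removeNodes (insert v W) := by
  ext s x <;> by_cases hs : s ≤ t <;>
    simp only [removeNodes, removeNode, trunc, hs, ↓reduceIte, mem_insert, forall_eq_or_imp,
      mem_sdiff, mem_erase, mem_filter, not_or, empty_sdiff, filter_empty, notMem_empty] <;> tauto

lemma flat_removeNode (S : GraphStream) (v t : ℕ) :
    (S.removeNode v).flat t = (S.flat t).removeNode v := by
  simp only [flat, removeNode, FinGraph.removeNode, FinGraph.mk.injEq]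
  constructor
  · ext x
    simp [and_left_comm]
  · exact (Finset.filter_biUnion _ _ _).symm

lemma mem_flat_verts {S : GraphStream} {t x : ℕ} :
    x ∈ (S.flat t).verts ↔ ∃ s ≤ t, x ∈ S.nodes s := by
  simp [flat]

namespace Valid

variable {S : GraphStream} {T : ℕ}

lemma trunc (hS : S.Valid T) (t : ℕ) : (S.trunc t).Valid t := by
  obtain ⟨harr, hnodes, hedges, hend⟩ := hS
  refine ⟨fun τ hτ => ?_, fun s τ hsτ => ?_, fun s τ hsτ => ?_, fun τ e he => ?_⟩
  · by_cases h : τ ≤ t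
    · simp only [GraphStream.trunc, if_pos h] at hτ
      exact ⟨(harr τ hτ).1, h⟩
    · simp [GraphStream.trunc, if_neg h] at hτ
  · simp only [GraphStream.trunc]
    split_ifs <;> simp [hnodes s τ hsτ]
  · simp only [GraphStream.trunc]
    split_ifs <;> simp [hedges s τ hsτ]
  · simp only [GraphStream.trunc] at he ⊢
    split_ifs at he with hτ
    · refine ⟨(hend τ e he).1, fun v hv => ?_⟩
      obtain ⟨s, hs, hvs⟩ := (hend τ e he).2 v hv
      exact ⟨s, hs, by simp [hs.trans hτ, hvs]⟩
    · simp at he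

lemma of_edges_subset (hS : S.Valid T) {S' : GraphStream} (hnodes : S'.nodes = S.nodes)
    (hedges : ∀ t, S'.edges t ⊆ S.edges t) : S'.Valid T := by
  obtain ⟨harr, hdn, hde, hend⟩ := hS
  refine ⟨fun τ hτ => harr τ ?_, fun s τ h => ?_,
    fun s τ h => (hde s τ h).mono (hedges s) (hedges τ), fun τ e he => ?_⟩
  · rw [hnodes] at hτ
    exact hτ.imp id (Finset.Nonempty.mono (hedges τ))
  · rw [hnodes]
    exact hdn s τ h
  · rw [hnodes]
    exact hend τ e (hedges τ he)

lemma removeNode (hS : S.Valid T) (v : ℕ) : (S.removeNode v).Valid T := by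
  obtain ⟨harr, hdn, hde, hend⟩ := hS
  refine ⟨fun τ hτ => harr τ ?_, fun s τ h => ?_, fun s τ h => ?_, fun τ e he => ?_⟩
  · exact hτ.imp (Finset.Nonempty.mono (Finset.erase_subset _ _))
      (Finset.Nonempty.mono (Finset.filter_subset _ _))
  · exact (hdn s τ h).mono (Finset.erase_subset _ _) (Finset.erase_subset _ _)
  · exact (hde s τ h).mono (Finset.filter_subset _ _) (Finset.filter_subset _ _)
  · obtain ⟨he, hve⟩ := Finset.mem_filter.1 he
    refine ⟨(hend τ e he).1, fun w hw => ?_⟩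
    obtain ⟨s, hs, hws⟩ := (hend τ e he).2 w hw
    exact ⟨s, hs, Finset.mem_erase.2 ⟨fun hwv => hve (hwv ▸ hw), hws⟩⟩

end Valid

lemma removeNode_eq_self {S : GraphStream} {T v : ℕ} (hS : S.Valid T) (hv : ¬ S.hasNode v) :
    S.removeNode v = S := by
  ext t x
  · simp only [removeNode, Finset.mem_erase, and_iff_right_iff_imp]
    rintro hx rfl
    exact hv ⟨t, hx⟩
  · simp only [removeNode, Finset.mem_filter, and_iff_left_iff_imp]
    intro hx hvx
    obtain ⟨s, -, hs⟩ := (hS.2.2.2 t x hx).2 v hvx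
    exact hv ⟨s, hs⟩

variable {S : GraphStream} {T D : ℕ}

lemma edges_project_subset (b : Bool) (s : ℕ) : (project b D T S).edges s ⊆ S.edges s := by
  intro e he
  rcases mem_of_mem_foldl_projStep_snd he with h | h
  · simp at h
  · exact (mem_procList.1 h).2

lemma Valid.trunc_project (hS : S.Valid T) (b : Bool) (t : ℕ) :
    ((project b D T S).trunc t).Valid t := by
  refine (hS.trunc t).of_edges_subset rfl fun s => ?_
  simp only [GraphStream.trunc]
  split_ifs
  · exact edges_project_subset b s
  · exact subset_rfl

lemma mem_projBBDS_edges_of_degree_le (hS : S.Valid T) {t s : ℕ} (htT : t ≤ T) (hst : s ≤ t)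
    {e : Sym2 ℕ} (he : e ∈ S.edges s) (hdeg : ∀ a ∈ e, (S.flat t).degree a ≤ D) :
    e ∈ (projBBDS D T S).edges s := by
  obtain ⟨L₃, hT⟩ := S.procList_prefix htT
  obtain ⟨L₁, L₂, ht⟩ := List.append_of_mem (mem_procList.2 ⟨hst, he⟩ : (s, e) ∈ S.procList t)
  have hpre : L₁ ++ [(s, e)] <+: S.procList t := ⟨L₂, by simp [ht]⟩
  show e ∈ ((S.procList T).foldl (projStep D true) (fun _ => 0, fun _ => ∅)).2 s
  rw [← hT, ht, List.append_assoc, List.cons_append]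
  refine mem_foldl_projStep_of_degree_le
    ((hpre.sublist.map Prod.snd).nodup (nodup_procList_snd hS t)) (fun q hq => ?_) hdeg
  obtain ⟨hq₁, hq₂⟩ := mem_procList.1 (hpre.sublist.subset hq)
  simp only [flat, Finset.mem_biUnion, Finset.mem_range]
  exact ⟨q.1, by omega, hq₂⟩

lemma removeNodes_trunc_projBBDS (hS : S.Valid T) {t : ℕ} (htT : t ≤ T) {W : Finset ℕ}
    (hW : (S.flat t).heavyVerts D ⊆ W) :
    ((projBBDS D T S).trunc t).removeNodes W = (S.trunc t).removeNodes W := by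
  ext s e
  · rfl
  simp only [removeNodes, GraphStream.trunc, Finset.mem_filter]
  split_ifs with hst
  · refine and_congr_left fun hW' => ⟨fun h => edges_project_subset true s h, fun he => ?_⟩
    refine mem_projBBDS_edges_of_degree_le hS htT hst he fun a ha => ?_
    by_contra hdeg
    have hav : a ∈ (S.flat t).verts := by
      obtain ⟨s', hs', has'⟩ := (hS.2.2.2 s e he).2 a ha
      exact mem_flat_verts.2 ⟨s', hs'.trans hst, has'⟩
    exact hW' a (hW (Finset.mem_filter.2 ⟨hav, not_le.1 hdeg⟩)) ha
  · rfl

end GraphStream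

def IsStreamChain (T : ℕ) (R : GraphStream → GraphStream → Prop) (A B : GraphStream)
    (n : ℕ) : Prop :=
  ∃ f : ℕ → GraphStream, f 0 = A ∧ f n = B ∧ (∀ i ≤ n, (f i).Valid T) ∧
    ∀ i < n, R (f i) (f (i + 1))

lemma streamChainDist_le {T : ℕ} {R : GraphStream → GraphStream → Prop} {A B : GraphStream}
    {n : ℕ} (h : IsStreamChain T R A B n) : streamChainDist T R A B ≤ n :=
  Nat.sInf_le h

namespace IsStreamChain

variable {T : ℕ} {R : GraphStream → GraphStream → Prop} {A B C : GraphStream} {m n : ℕ}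

lemma refl (hA : A.Valid T) : IsStreamChain T R A A 0 :=
  ⟨fun _ => A, rfl, rfl, fun _ _ => hA, fun _ h => absurd h (Nat.not_lt_zero _)⟩

lemma valid_right (h : IsStreamChain T R A B n) : B.Valid T := by
  obtain ⟨f, -, rfl, hf, -⟩ := h
  exact hf n le_rfl

lemma snoc (h : IsStreamChain T R A B n) (hC : C.Valid T) (hBC : R B C) :
    IsStreamChain T R A C (n + 1) := by
  obtain ⟨f, hf0, hfn, hfv, hfR⟩ := h
  refine ⟨fun i => if i ≤ n then f i else C, by simp [hf0], by simp, fun i hi => ?_,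
    fun i hi => ?_⟩
  · dsimp only
    split_ifs with h
    exacts [hfv i h, hC]
  · rcases Nat.lt_succ_iff_lt_or_eq.1 hi with hi | rfl
    · simpa [hi.le, Nat.succ_le_of_lt hi] using hfR i hi
    · simpa [hfn] using hBC

lemma trans (h₁ : IsStreamChain T R A B m) (h₂ : IsStreamChain T R B C n) :
    IsStreamChain T R A C (m + n) := by
  induction n generalizing C with
  | zero =>
    obtain ⟨g, rfl, rfl, -, -⟩ := h₂
    exact h₁
  | succ n ih =>
    obtain ⟨g, hg0, rfl, hgv, hgR⟩ := h₂
    exact (ih ⟨g, hg0, rfl, fun i hi => hgv i (by omega), fun i hi => hgR i (by omega)⟩).snoc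
      (hgv _ le_rfl) (hgR n n.lt_succ_self)

lemma symm [Std.Symm R] (h : IsStreamChain T R A B n) : IsStreamChain T R B A n := by
  obtain ⟨f, hf0, hfn, hfv, hfR⟩ := h
  refine ⟨fun i => f (n - i), by simpa using hfn, by simpa using hf0,
    fun i _ => hfv _ (Nat.sub_le n i), fun i hi => symm_of R ?_⟩
  dsimp only
  rw [show n - i = n - (i + 1) + 1 by omega]
  exact hfR _ (by omega)

end IsStreamChain

instance : Std.Symm nodeNeighborStream :=
  ⟨fun _ _ h => h.symm⟩

lemma exists_chain_removeNodes {T : ℕ} {Z : GraphStream} (hZ : Z.Valid T) (W : Finset ℕ) :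
    ∃ n ≤ W.card, IsStreamChain T nodeNeighborStream Z (Z.removeNodes W) n := by
  induction W using Finset.induction_on with
  | empty => exact ⟨0, le_rfl, by simpa [GraphStream.removeNodes_empty] using .refl hZ⟩
  | insert v W hvW ih =>
    obtain ⟨n, hn, hchain⟩ := ih
    have hY := hchain.valid_right
    rw [Z.removeNodes_insert, Finset.card_insert_of_notMem hvW]
    by_cases hv : (Z.removeNodes W).hasNode v
    · exact ⟨n + 1, by omega, hchain.snoc (hY.removeNode v) (Or.inl ⟨v, hv, rfl⟩)⟩
    · exact ⟨n, by omega, by rwa [GraphStream.removeNode_eq_self hY hv]⟩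

lemma exists_chain_projBBDS_removeNode {T D ℓ t : ℕ} {S : GraphStream} (v : ℕ)
    (hS : S.Valid T) (htT : t ≤ T) (hb : S.DLBoundedThrough D ℓ t) :
    ∃ n ≤ 2 * ℓ + 1, IsStreamChain t nodeNeighborStream ((projBBDS D T S).trunc t)
      ((projBBDS D T (S.removeNode v)).trunc t) n := by
  set W := ((S.flat t).heavyVerts D).erase v
  have hW : W.card ≤ ℓ := Finset.card_erase_le.trans hb
  have hAW : ((projBBDS D T S).trunc t).removeNodes (insert v W)
      = (S.trunc t).removeNodes (insert v W) :=
    GraphStream.removeNodes_trunc_projBBDS hS htT (by simp [W, Finset.insert_erase_subset])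
  have hBW : ((projBBDS D T (S.removeNode v)).trunc t).removeNodes W
      = ((S.removeNode v).trunc t).removeNodes W := by
    refine GraphStream.removeNodes_trunc_projBBDS (hS.removeNode v) htT ?_
    rw [GraphStream.flat_removeNode]
    exact FinGraph.heavyVerts_removeNode_subset _ D v
  have hAvalid : ((projBBDS D T S).trunc t).Valid t := hS.trunc_project true t
  have hBvalid : ((projBBDS D T (S.removeNode v)).trunc t).Valid t :=
    (hS.removeNode v).trunc_project true t
  obtain ⟨n₁, hn₁, hA⟩ := exists_chain_removeNodes hAvalid (insert v W)
  obtain ⟨n₂, hn₂, hB⟩ := exists_chain_removeNodes hBvalid W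
  refine ⟨n₁ + n₂, by have := Finset.card_insert_le v W; omega, hA.trans ?_⟩
  rw [hAW, ← GraphStream.removeNodes_trunc_removeNode, ← hBW]
  exact hB.symm

theorem bbds_node_to_node_stability_general (T D ℓ : ℕ) (S S' : GraphStream)
    (hS : S.Valid T) (hS' : S'.Valid T) (hnb : nodeNeighborStream S S')
    (t : ℕ) (htT : t ≤ T)
    (hbS : S.DLBoundedThrough D ℓ t) (hbS' : S'.DLBoundedThrough D ℓ t) :
    streamNodeDist t ((projBBDS D T S).trunc t) ((projBBDS D T S').trunc t) ≤ 2 * ℓ + 1 := by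
  rcases hnb with ⟨v, -, rfl⟩ | ⟨v, -, rfl⟩
  · obtain ⟨n, hn, hchain⟩ := exists_chain_projBBDS_removeNode v hS htT hbS
    exact (streamChainDist_le hchain).trans hn
  · obtain ⟨n, hn, hchain⟩ := exists_chain_projBBDS_removeNode v hS' htT hbS'
    exact (streamChainDist_le hchain.symm).trans hn

/-- node-to-node stability of the BBDS projection.
For every pair of node-neighboring insertion-only graph streams `S, S'` of length `T`
and every time step `t ∈ [T]` such that both streams are `(D, ℓ)`-bounded through
time `t`, the node distance between the BBDS-projected streams through time `t` is at
most `2ℓ + 1`. -/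
theorem bbds_node_to_node_stability (T D ℓ : ℕ) (S S' : GraphStream)
    (hS : S.Valid T) (hS' : S'.Valid T) (hnb : nodeNeighborStream S S')
    (t : ℕ) (ht1 : 1 ≤ t) (htT : t ≤ T)
    (hbS : S.DLBoundedThrough D ℓ t) (hbS' : S'.DLBoundedThrough D ℓ t) :
    streamNodeDist t ((projBBDS D T S).trunc t) ((projBBDS D T S').trunc t) ≤ 2 * ℓ + 1 :=
  bbds_node_to_node_stability_general T D ℓ S S' hS hS' hnb t htT hbS hbS'
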